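/- Let R be a commutative ring, e ≥ 2 an integer, A := R[X]/(X^e), π the image of X, E a finite free A-module of rank h₁, and let 0 = F^{[0]} ⊆ F^{[1]} ⊆ ⋯ ⊆ F^{[e]} be a Pappas–Rapoport filtration of rank d₁ on E, with 0 < d₁ < h₁. For 1 ≤ j ≤ e set F^{[e+j]} := {x ∈ E : π^j·x ∈ F^{[e−j]}} and for 0 ≤ j ≤ e−1 set F'^{[j]} := {x ∈ E : π·x ∈ F^{[j]}}. For 1 ≤ j ≤ e let α^{[j]} : F^{[2e+1−j]}/F^{[2e−j]} ≅ F'^{[j−1]}/F^{[j]} be the isomorphism induced by multiplication by π^{e−j}. Then for every 2 ≤ j ≤ e the following square commutes: α^{[j]} composed with the map F^{[2e+2−j]}/F^{[2e+1−j]} → F^{[2e+1−j]}/F^{[2e−j]} induced by multiplication by π equals the map F'^{[j−2]}/F^{[j−1]} → F'^{[j−1]}/F^{[j]} induced by the inclusion F'^{[j−2]} ⊆ F'^{[j−1]}, composed with α^{[j−1]} : F^{[2e+2−j]}/F^{[2e+1−j]} ≅ F'^{[j−2]}/F^{[j−1]}. (That is, under the isomorphisms α^{[j]}, the dual primitive Hasse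 map—multiplication by π on the graded pieces of the extended filtration—is identified with the natural map induced by inclusion.) -/

import Mathlib

/-- The ring `A = R[X]/(X^e)`. -/
abbrev TruncPoly (R : Type*) [CommRing R] (e : ℕ) : Type _ :=
  Polynomial R ⧸ Ideal.span {(Polynomial.X : Polynomial R) ^ e}

/-- The image `π` of `X` in `A = R[X]/(X^e)`. -/
noncomputable def piX (R : Type*) [CommRing R] (e : ℕ) : TruncPoly R e :=
  Ideal.Quotient.mk _ Polynomial.X

/-- Multiplication by `π^k`, as an `R`-linear endomorphism of a module over `R[X]/(X^e)`. -/
noncomputable def mulPi (R : Type*) [CommRing R] (e : ℕ)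
    (E : Type*) [AddCommGroup E] [Module (TruncPoly R e) E] [Module R E]
    [IsScalarTower R (TruncPoly R e) E] (k : ℕ) : E →ₗ[R] E :=
  (LinearMap.lsmul (TruncPoly R e) E (piX R e ^ k)).restrictScalars R

/-- A Pappas–Rapoport filtration of rank `d₁` on a module `E` over `A = R[X]/(X^e)`:
a chain of `R`-submodules `0 = F^{[0]} ⊆ F^{[1]} ⊆ ⋯ ⊆ F^{[e]}` of `E` such that each
`F^{[j]}` is an `R`-module direct summand of `E`, each quotient `F^{[j]}/F^{[j-1]}` is a
finite free `R`-module of rank `d₁`, and `π·F^{[j]} ⊆ F^{[j-1]}` for `1 ≤ j ≤ e`. -/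
def IsPRFiltration (R : Type*) [CommRing R] (e : ℕ)
    (E : Type*) [AddCommGroup E] [Module (TruncPoly R e) E] [Module R E]
    [IsScalarTower R (TruncPoly R e) E] (d₁ : ℕ) (F : ℕ → Submodule R E) : Prop :=
  F 0 = ⊥ ∧
  (∀ j < e, F j ≤ F (j + 1)) ∧
  (∀ j ≤ e, ∃ q : Submodule R E, IsCompl (F j) q) ∧
  (∀ j < e,
    Module.Finite R (↥(F (j + 1)) ⧸ (F j).comap (F (j + 1)).subtype) ∧
    Module.Free R (↥(F (j + 1)) ⧸ (F j).comap (F (j + 1)).subtype) ∧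
    Module.finrank R (↥(F (j + 1)) ⧸ (F j).comap (F (j + 1)).subtype) = d₁) ∧
  (∀ j < e, ∀ x ∈ F (j + 1), piX R e • x ∈ F j)

/-- The member `F^{[e+j]} := {x ∈ E : π^j·x ∈ F^{[e-j]}}` of the extended
(dual) Pappas–Rapoport filtration. -/
noncomputable def PRext (R : Type*) [CommRing R] (e : ℕ)
    (E : Type*) [AddCommGroup E] [Module (TruncPoly R e) E] [Module R E]
    [IsScalarTower R (TruncPoly R e) E] (F : ℕ → Submodule R E) (j : ℕ) : Submodule R E :=
  (F (e - j)).comap (mulPi R e E j)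

/-- The submodule `F'^{[j]} := {x ∈ E : π·x ∈ F^{[j]}}`. -/
noncomputable def PRdiv (R : Type*) [CommRing R] (e : ℕ)
    (E : Type*) [AddCommGroup E] [Module (TruncPoly R e) E] [Module R E]
    [IsScalarTower R (TruncPoly R e) E] (F : ℕ → Submodule R E) (j : ℕ) : Submodule R E :=
  (F j).comap (mulPi R e E 1)

section

variable {R : Type*} [CommRing R] {e : ℕ}
  {E : Type*} [AddCommGroup E] [Module (TruncPoly R e) E] [Module R E]
  [IsScalarTower R (TruncPoly R e) E] {F : ℕ → Submodule R E}

theorem pow_smul_mem_PRdiv {k l m : ℕ} {x : E} (hx : x ∈ PRext R e E F l) (hkl : k + 1 = l)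
    (hlm : e - l = m) : piX R e ^ k • x ∈ PRdiv R e E F m := by
  subst hkl hlm
  show piX R e ^ 1 • piX R e ^ k • x ∈ F (e - (k + 1))
  rwa [smul_smul, ← pow_add, Nat.add_comm 1 k]

namespace IsPRFiltration

variable {d₁ : ℕ}

theorem mono (hF : IsPRFiltration R e E d₁ F) {i k : ℕ} (hik : i ≤ k) (hke : k ≤ e) :
    F i ≤ F k := by
  induction k, hik using Nat.le_induction with
  | base => exact le_rfl
  | succ k _ ih => exact (ih (by omega)).trans (hF.2.1 k (by omega))

theorem PRdiv_mono (hF : IsPRFiltration R e E d₁ F) {i k : ℕ} (hik : i ≤ k) (hke : k ≤ e) :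
    PRdiv R e E F i ≤ PRdiv R e E F k :=
  Submodule.comap_mono (hF.mono hik hke)

theorem smul_mem_PRext (hF : IsPRFiltration R e E d₁ F) {k l : ℕ} {x : E}
    (hx : x ∈ PRext R e E F l) (hkl : k + 1 = l) : piX R e • x ∈ PRext R e E F k := by
  subst hkl
  show piX R e ^ k • piX R e • x ∈ F (e - k)
  rw [smul_smul, ← pow_succ]
  exact hF.mono (by omega) (by omega) hx

end IsPRFiltration

end

theorem dual_primitive_hasse_map_is_natural_map_general
    (R : Type*) [CommRing R] (e : ℕ) (d₁ : ℕ)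
    (E : Type*) [AddCommGroup E] [Module (TruncPoly R e) E] [Module R E]
    [IsScalarTower R (TruncPoly R e) E]
    (F : ℕ → Submodule R E) (hF : IsPRFiltration R e E d₁ F)
    (j : ℕ) (hje : j ≤ e)
    (αj : (↥(PRext R e E F (e + 1 - j)) ⧸
          (PRext R e E F (e - j)).comap (PRext R e E F (e + 1 - j)).subtype) ≃ₗ[R]
        (↥(PRdiv R e E F (j - 1)) ⧸ (F j).comap (PRdiv R e E F (j - 1)).subtype))
    (hαj : ∀ (x : PRext R e E F (e + 1 - j))
        (hx : piX R e ^ (e - j) • (x : E) ∈ PRdiv R e E F (j - 1)),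
      αj (Submodule.Quotient.mk x) =
        Submodule.Quotient.mk (⟨piX R e ^ (e - j) • (x : E), hx⟩ : PRdiv R e E F (j - 1)))
    (αj1 : (↥(PRext R e E F (e + 2 - j)) ⧸
          (PRext R e E F (e + 1 - j)).comap (PRext R e E F (e + 2 - j)).subtype) ≃ₗ[R]
        (↥(PRdiv R e E F (j - 2)) ⧸ (F (j - 1)).comap (PRdiv R e E F (j - 2)).subtype))
    (hαj1 : ∀ (x : PRext R e E F (e + 2 - j))
        (hx : piX R e ^ (e - j + 1) • (x : E) ∈ PRdiv R e E F (j - 2)),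
      αj1 (Submodule.Quotient.mk x) =
        Submodule.Quotient.mk (⟨piX R e ^ (e - j + 1) • (x : E), hx⟩ : PRdiv R e E F (j - 2)))
    (μ : (↥(PRext R e E F (e + 2 - j)) ⧸
          (PRext R e E F (e + 1 - j)).comap (PRext R e E F (e + 2 - j)).subtype) →ₗ[R]
        (↥(PRext R e E F (e + 1 - j)) ⧸
          (PRext R e E F (e - j)).comap (PRext R e E F (e + 1 - j)).subtype))
    (hμ : ∀ (x : PRext R e E F (e + 2 - j)) (hx : piX R e • (x : E) ∈ PRext R e E F (e + 1 - j)),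
      μ (Submodule.Quotient.mk x) =
        Submodule.Quotient.mk (⟨piX R e • (x : E), hx⟩ : PRext R e E F (e + 1 - j)))
    (ι : (↥(PRdiv R e E F (j - 2)) ⧸ (F (j - 1)).comap (PRdiv R e E F (j - 2)).subtype) →ₗ[R]
        (↥(PRdiv R e E F (j - 1)) ⧸ (F j).comap (PRdiv R e E F (j - 1)).subtype))
    (hι : ∀ (x : PRdiv R e E F (j - 2)) (hx : (x : E) ∈ PRdiv R e E F (j - 1)),
      ι (Submodule.Quotient.mk x) =
        Submodule.Quotient.mk (⟨(x : E), hx⟩ : PRdiv R e E F (j - 1))) :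
    ∀ z, αj (μ z) = ι (αj1 z) := by
  intro z
  obtain ⟨x, rfl⟩ := Submodule.Quotient.mk_surjective _ z
  have hπx : piX R e • (x : E) ∈ PRext R e E F (e + 1 - j) :=
    hF.smul_mem_PRext x.2 (by omega)
  have hαπx : piX R e ^ (e - j) • piX R e • (x : E) ∈ PRdiv R e E F (j - 1) :=
    pow_smul_mem_PRdiv hπx (by omega) (by omega)
  have hαx : piX R e ^ (e - j + 1) • (x : E) ∈ PRdiv R e E F (j - 2) :=
    pow_smul_mem_PRdiv x.2 (by omega) (by omega)
  rw [hμ x hπx, hαj _ hαπx, hαj1 x hαx, hι _ (hF.PRdiv_mono (by omega) (by omega) hαx)]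
  congr 2
  rw [smul_smul, ← pow_succ]

/-- **The dual primitive Hasse map is the natural inclusion map.**
For `2 ≤ j ≤ e`, let `α^{[j]} : F^{[2e+1-j]}/F^{[2e-j]} ≅ F'^{[j-1]}/F^{[j]}` and
`α^{[j-1]} : F^{[2e+2-j]}/F^{[2e+1-j]} ≅ F'^{[j-2]}/F^{[j-1]}` be the isomorphisms induced by
multiplication by `π^{e-j}` resp. `π^{e-j+1}`, let `μ` be the map
`F^{[2e+2-j]}/F^{[2e+1-j]} → F^{[2e+1-j]}/F^{[2e-j]}` induced by multiplication by `π` (the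
dual primitive Hasse map), and let `ι : F'^{[j-2]}/F^{[j-1]} → F'^{[j-1]}/F^{[j]}` be the map
induced by the inclusion `F'^{[j-2]} ⊆ F'^{[j-1]}`. Then `α^{[j]} ∘ μ = ι ∘ α^{[j-1]}`. -/
theorem dual_primitive_hasse_map_is_natural_map
    (R : Type*) [CommRing R] (e : ℕ) (he : 2 ≤ e) (h₁ d₁ : ℕ)
    (hd : 0 < d₁) (hdh : d₁ < h₁)
    (E : Type*) [AddCommGroup E] [Module (TruncPoly R e) E] [Module R E]
    [IsScalarTower R (TruncPoly R e) E]
    [Module.Finite (TruncPoly R e) E] [Module.Free (TruncPoly R e) E]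
    (hrank : Module.finrank (TruncPoly R e) E = h₁)
    (F : ℕ → Submodule R E) (hF : IsPRFiltration R e E d₁ F)
    (j : ℕ) (hj1 : 2 ≤ j) (hje : j ≤ e)
    (αj : (↥(PRext R e E F (e + 1 - j)) ⧸
          (PRext R e E F (e - j)).comap (PRext R e E F (e + 1 - j)).subtype) ≃ₗ[R]
        (↥(PRdiv R e E F (j - 1)) ⧸ (F j).comap (PRdiv R e E F (j - 1)).subtype))
    (hαj : ∀ (x : PRext R e E F (e + 1 - j))
        (hx : piX R e ^ (e - j) • (x : E) ∈ PRdiv R e E F (j - 1)),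
      αj (Submodule.Quotient.mk x) =
        Submodule.Quotient.mk (⟨piX R e ^ (e - j) • (x : E), hx⟩ : PRdiv R e E F (j - 1)))
    (αj1 : (↥(PRext R e E F (e + 2 - j)) ⧸
          (PRext R e E F (e + 1 - j)).comap (PRext R e E F (e + 2 - j)).subtype) ≃ₗ[R]
        (↥(PRdiv R e E F (j - 2)) ⧸ (F (j - 1)).comap (PRdiv R e E F (j - 2)).subtype))
    (hαj1 : ∀ (x : PRext R e E F (e + 2 - j))
        (hx : piX R e ^ (e - j + 1) • (x : E) ∈ PRdiv R e E F (j - 2)),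
      αj1 (Submodule.Quotient.mk x) =
        Submodule.Quotient.mk (⟨piX R e ^ (e - j + 1) • (x : E), hx⟩ : PRdiv R e E F (j - 2)))
    (μ : (↥(PRext R e E F (e + 2 - j)) ⧸
          (PRext R e E F (e + 1 - j)).comap (PRext R e E F (e + 2 - j)).subtype) →ₗ[R]
        (↥(PRext R e E F (e + 1 - j)) ⧸
          (PRext R e E F (e - j)).comap (PRext R e E F (e + 1 - j)).subtype))
    (hμ : ∀ (x : PRext R e E F (e + 2 - j)) (hx : piX R e • (x : E) ∈ PRext R e E F (e + 1 - j)),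
      μ (Submodule.Quotient.mk x) =
        Submodule.Quotient.mk (⟨piX R e • (x : E), hx⟩ : PRext R e E F (e + 1 - j)))
    (ι : (↥(PRdiv R e E F (j - 2)) ⧸ (F (j - 1)).comap (PRdiv R e E F (j - 2)).subtype) →ₗ[R]
        (↥(PRdiv R e E F (j - 1)) ⧸ (F j).comap (PRdiv R e E F (j - 1)).subtype))
    (hι : ∀ (x : PRdiv R e E F (j - 2)) (hx : (x : E) ∈ PRdiv R e E F (j - 1)),
      ι (Submodule.Quotient.mk x) =
        Submodule.Quotient.mk (⟨(x : E), hx⟩ : PRdiv R e E F (j - 1))) :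
    ∀ z, αj (μ z) = ι (αj1 z) :=
  dual_primitive_hasse_map_is_natural_map_general R e d₁ E F hF j hje αj hαj αj1 hαj1 μ hμ ι hι
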